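/- arXiv:math/0604356 — 6 statements merged into one kernel-verified Lean document; each statement's English description precedes it below -/
import Mathlib

section
/- Let G be a finite abelian group of order n and let γ be a sequence in G in which the multiplicity of every term is at most the multiplicity of the zero element 0. Then for every subsequence of γ of length greater than n there is a subsequence of γ of length exactly n having the same sum. -/
open Finset Pointwise

lemma scherk_aux {G : Type*} [AddCommGroup G] [DecidableEq G] :
    ∀ (m : ℕ) (B A : Finset G), B.card ≤ m → 0 ∈ A → 0 ∈ B →
      (∀ a ∈ A, ∀ b ∈ B, a + b = 0 → a = 0) →
      A.card + B.card ≤ (A + B).card + 1 := by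
  intro m
  induction m with
  | zero =>
    intro B A hBcard hA hB _
    have := Finset.card_pos.mpr ⟨0, hB⟩
    omega
  | succ m ih =>
    intro B A hBcard hA hB huniq
    by_cases hcase : ∃ e ∈ A, e ≠ 0 ∧ ∃ b ∈ B, b + e ∉ A
    · obtain ⟨e, heA, hene, b₀, hb₀B, hb₀⟩ := hcase
      classical
      set D := B.filter (fun b => b + e ∉ A) with hD
      set B' := B.filter (fun b => b + e ∈ A) with hB'
      set A' := A ∪ D.image (fun b => b + e) with hA'
      have hDcard : B'.card + D.card = B.card := by
        rw [hB', hD]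
        exact Finset.card_filter_add_card_filter_not _
      have himg_disj : Disjoint A (D.image (fun b => b + e)) := by
        rw [Finset.disjoint_right]
        intro x hx hxA
        obtain ⟨b, hb, rfl⟩ := Finset.mem_image.mp hx
        exact (Finset.mem_filter.mp hb).2 hxA
      have hA'card : A'.card = A.card + D.card := by
        rw [hA', Finset.card_union_of_disjoint himg_disj,
          Finset.card_image_of_injective _ (add_left_injective e)]
      have h0A' : (0 : G) ∈ A' := Finset.mem_union_left _ hA
      have h0B' : (0 : G) ∈ B' := Finset.mem_filter.mpr ⟨hB, by simpa using heA⟩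
      have hsub : A' + B' ⊆ A + B := by
        intro x hx
        obtain ⟨u, hu, v, hv, rfl⟩ := Finset.mem_add.mp hx
        have hvB : v ∈ B := (Finset.mem_filter.mp hv).1
        have hveA : v + e ∈ A := (Finset.mem_filter.mp hv).2
        rcases Finset.mem_union.mp hu with huA | huI
        · exact Finset.add_mem_add huA hvB
        · obtain ⟨b, hb, rfl⟩ := Finset.mem_image.mp huI
          have hbB : b ∈ B := (Finset.mem_filter.mp hb).1
          have : b + e + v = (v + e) + b := by abel
          rw [this]
          exact Finset.add_mem_add hveA hbB
      have huniq' : ∀ a ∈ A', ∀ b ∈ B', a + b = 0 → a = 0 := by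
        intro x hx y hy hxy
        have hyB : y ∈ B := (Finset.mem_filter.mp hy).1
        have hyeA : y + e ∈ A := (Finset.mem_filter.mp hy).2
        rcases Finset.mem_union.mp hx with hxA | hxI
        · exact huniq x hxA y hyB hxy
        · obtain ⟨b, hb, rfl⟩ := Finset.mem_image.mp hxI
          have hbB : b ∈ B := (Finset.mem_filter.mp hb).1
          exfalso
          have h1 : (y + e) + b = 0 := by rw [← hxy]; abel
          have h2 : y + e = 0 := huniq _ hyeA _ hbB h1
          have hb0 : b = 0 := by
            have := h1; rw [h2, zero_add] at this; exact this
          have h3 : e + y = 0 := by rw [← h2]; abel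
          exact hene (huniq e heA y hyB h3)
      have hB'lt : B'.card < B.card := by
        apply Finset.card_lt_card
        rw [Finset.ssubset_iff_of_subset (Finset.filter_subset _ _)]
        exact ⟨b₀, hb₀B, fun h => hb₀ (Finset.mem_filter.mp h).2⟩
      have := ih B' A' (by omega) h0A' h0B' huniq'
      have hcard_sub := Finset.card_le_card hsub
      omega
    · push_neg at hcase
      -- A ∩ B ⊆ {0}
      have hAB : ∀ c ∈ A, c ∈ B → c = 0 := by
        intro c hcA hcB
        by_contra hc0
        have key : ∀ k : ℕ, (k + 1) • c ∈ A ∧ (k + 1) • c ≠ 0 := by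
          intro k
          induction k with
          | zero => simpa using ⟨hcA, hc0⟩
          | succ k ihk =>
            obtain ⟨hxA, hx0⟩ := ihk
            have hmem : c + (k + 1) • c ∈ A := hcase _ hxA hx0 c hcB
            have hne : c + (k + 1) • c ≠ 0 := by
              intro h
              have : (k + 1) • c + c = 0 := by rw [← h]; abel
              exact hx0 (huniq _ hxA c hcB this)
            constructor
            · have : (k + 1 + 1) • c = c + (k + 1) • c := by
                rw [add_nsmul, one_nsmul]; abel
              rw [this]; exact hmem
            · have : (k + 1 + 1) • c = c + (k + 1) • c := by
                rw [add_nsmul, one_nsmul]; abel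
              rw [this]; exact hne
        -- pigeonhole: ℕ → A
        have : ∃ k l : ℕ, k ≠ l ∧ ((k+1) • c : G) = (l+1) • c := by
          have := Finite.exists_ne_map_eq_of_infinite
            (fun k : ℕ => (⟨(k+1) • c, (key k).1⟩ : {x // x ∈ A}))
          obtain ⟨k, l, hkl, h⟩ := this
          exact ⟨k, l, hkl, by simpa using congrArg Subtype.val h⟩
        obtain ⟨k, l, hkl, heq⟩ := this
        rcases Nat.lt_or_ge k l with h | h
        · have : (l - k) • c + (k + 1) • c = (k + 1) • c := by
            rw [← add_nsmul]
            have : l - k + (k + 1) = l + 1 := by omega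
            rw [this, heq]
          have hz : (l - k) • c = 0 := by
            have := add_right_cancel (b := (k+1) • c) (by rw [this, zero_add] : (l-k) • c + (k+1) • c = 0 + (k+1) • c)
            exact this
          obtain ⟨j, hj⟩ : ∃ j, l - k = j + 1 := ⟨l - k - 1, by omega⟩
          exact (key j).2 (by rw [← hj]; exact hz)
        · have hlk : l < k := by omega
          have : (k - l) • c + (l + 1) • c = (l + 1) • c := by
            rw [← add_nsmul]
            have : k - l + (l + 1) = k + 1 := by omega
            rw [this, heq]
          have hz : (k - l) • c = 0 := by
            exact add_right_cancel (b := (l+1) • c) (by rw [this, zero_add] : (k-l) • c + (l+1) • c = 0 + (l+1) • c)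
          obtain ⟨j, hj⟩ : ∃ j, k - l = j + 1 := ⟨k - l - 1, by omega⟩
          exact (key j).2 (by rw [← hj]; exact hz)
      have hinter : (A ∩ B).card ≤ 1 := by
        apply Finset.card_le_one.mpr
        intro a ha b hb
        rw [hAB a (Finset.mem_inter.mp ha).1 (Finset.mem_inter.mp ha).2,
          hAB b (Finset.mem_inter.mp hb).1 (Finset.mem_inter.mp hb).2]
      have hunion : A ∪ B ⊆ A + B := by
        intro x hx
        rcases Finset.mem_union.mp hx with h | h
        · have := Finset.add_mem_add h hB; simpa using this
        · have := Finset.add_mem_add hA h; simpa using this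
      have h1 := Finset.card_union_add_card_inter A B
      have h2 := Finset.card_le_card hunion
      omega

lemma claimB {G : Type*} [AddCommGroup G] [Fintype G] [DecidableEq G] (z : ℕ) (σ : Multiset G)
    (h0 : σ.count 0 = 0) (hz : ∀ g, σ.count g ≤ z)
    (hcard : Fintype.card G < Multiset.card σ) :
    ∃ ρ : Multiset G, ρ ≤ σ ∧ ρ ≠ 0 ∧ Multiset.card ρ ≤ z ∧ ρ.sum = 0 := by
  by_contra hcon
  push_neg at hcon
  set A : ℕ → Finset G := fun k => univ.filter (fun a => k ≤ σ.count a) with hAdef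
  -- main induction producing T k
  have main : ∀ k, k ≤ z → ∃ T : Finset G, 0 ∈ T ∧
      (∀ t ∈ T, ∃ β : Multiset G, β ≤ σ ∧ Multiset.card β ≤ k ∧ β.sum = t) ∧
      1 + ∑ i ∈ Icc 1 k, (A i).card ≤ T.card := by
    intro k
    induction k with
    | zero =>
      intro _
      refine ⟨{0}, Finset.mem_singleton_self 0, ?_, by simp⟩
      intro t ht
      rw [Finset.mem_singleton] at ht
      exact ⟨0, by simp [ht]⟩
    | succ k ihk =>
      intro hkz
      obtain ⟨T, hT0, hTrep, hTcard⟩ := ihk (by omega)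
      refine ⟨T + insert 0 (A (k+1)), ?_, ?_, ?_⟩
      · have := Finset.add_mem_add hT0 (Finset.mem_insert_self 0 (A (k+1)))
        simpa using this
      · intro t ht
        obtain ⟨x, hx, y, hy, rfl⟩ := Finset.mem_add.mp ht
        obtain ⟨β, hβσ, hβcard, hβsum⟩ := hTrep x hx
        rcases Finset.mem_insert.mp hy with rfl | hyA
        · exact ⟨β, hβσ, by omega, by rw [hβsum, add_zero]⟩
        · have hycount : k + 1 ≤ σ.count y := (Finset.mem_filter.mp hyA).2
          refine ⟨y ::ₘ β, ?_, by simpa using hβcard, by rw [Multiset.sum_cons, hβsum, add_comm]⟩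
          rw [Multiset.le_iff_count]
          intro a
          by_cases hay : a = y
          · subst hay
            have := Multiset.count_le_card a β
            rw [Multiset.count_cons_self]
            omega
          · rw [Multiset.count_cons_of_ne hay]
            exact Multiset.le_iff_count.mp hβσ a
      · -- scherk step
        have h0A : (0 : G) ∉ A (k+1) := by
          simp only [hAdef, Finset.mem_filter]
          rintro ⟨-, h⟩
          omega
        have huniq : ∀ a ∈ T, ∀ b ∈ insert 0 (A (k+1)), a + b = 0 → a = 0 := by
          intro a ha b hb hab
          rcases Finset.mem_insert.mp hb with rfl | hbA
          · rwa [add_zero] at hab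
          · exfalso
            obtain ⟨β, hβσ, hβcard, hβsum⟩ := hTrep a ha
            have hbcount : k + 1 ≤ σ.count b := (Finset.mem_filter.mp hbA).2
            have hle : b ::ₘ β ≤ σ := by
              rw [Multiset.le_iff_count]
              intro x
              by_cases hxb : x = b
              · subst hxb
                have := Multiset.count_le_card x β
                rw [Multiset.count_cons_self]
                omega
              · rw [Multiset.count_cons_of_ne hxb]
                exact Multiset.le_iff_count.mp hβσ x
            refine hcon (b ::ₘ β) hle (by simp) (by rw [Multiset.card_cons]; omega) ?_
            rw [Multiset.sum_cons, hβsum]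
            rw [add_comm] at hab
            exact hab
        have hsch := scherk_aux (insert 0 (A (k+1))).card (insert 0 (A (k+1))) T le_rfl hT0
          (Finset.mem_insert_self 0 _) huniq
        have hins : (insert 0 (A (k+1))).card = (A (k+1)).card + 1 :=
          Finset.card_insert_of_notMem h0A
        rw [Finset.sum_Icc_succ_top (by omega : 1 ≤ k + 1)]
        omega
  obtain ⟨T, hT0, hTrep, hTcard⟩ := main z le_rfl
  -- sum identity
  have hsum : ∑ i ∈ Icc 1 z, (A i).card = Multiset.card σ := by
    have h1 : ∀ i, (A i).card = ∑ a : G, (if i ≤ σ.count a then 1 else 0) := by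
      intro i
      rw [hAdef]
      exact Finset.card_filter _ _
    calc ∑ i ∈ Icc 1 z, (A i).card
        = ∑ i ∈ Icc 1 z, ∑ a : G, (if i ≤ σ.count a then 1 else 0) := by
          exact Finset.sum_congr rfl (fun i _ => h1 i)
      _ = ∑ a : G, ∑ i ∈ Icc 1 z, (if i ≤ σ.count a then 1 else 0) := Finset.sum_comm
      _ = ∑ a : G, σ.count a := by
          apply Finset.sum_congr rfl
          intro a _
          rw [← Finset.card_filter]
          have : (Icc 1 z).filter (fun i => i ≤ σ.count a) = Icc 1 (σ.count a) := by
            ext i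
            simp only [Finset.mem_filter, Finset.mem_Icc]
            have := hz a
            omega
          rw [this]
          simp [Nat.card_Icc]
      _ = Multiset.card σ := by
          rw [← Multiset.toFinset_sum_count_eq σ]
          symm
          apply Finset.sum_subset (Finset.subset_univ _)
          intro x _ hx
          simpa [Multiset.count_eq_zero] using hx
  have hTle : T.card ≤ Fintype.card G := by
    simpa using Finset.card_le_card (Finset.subset_univ T)
  omega

/-- In a finite abelian group of order `n`, if the multiplicity of each term of a
sequence `γ` is at most the multiplicity of `0`, then every subsequence sum of length
greater than `n` equals a subsequence sum of length exactly `n`. -/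
theorem long_sum_eq_length_n_sum {G : Type*} [AddCommGroup G] [Fintype G] [DecidableEq G] (n : ℕ)
    (hn : Fintype.card G = n) (γ : Multiset G)
    (hmult : ∀ g : G, γ.count g ≤ γ.count 0) :
    ∀ σ ≤ γ, n < Multiset.card σ →
      ∃ τ ≤ γ, Multiset.card τ = n ∧ τ.sum = σ.sum := by
  set z := γ.count 0 with hzdef
  have step : ∀ σ, σ ≤ γ → n < Multiset.card σ →
      ∃ σ', σ' ≤ γ ∧ Multiset.card σ' + 1 = Multiset.card σ ∧ σ'.sum = σ.sum := by
    intro σ hσγ hσn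
    by_cases h0 : (0 : G) ∈ σ
    · refine ⟨σ.erase 0, le_trans (Multiset.erase_le 0 σ) hσγ, ?_, ?_⟩
      · rw [Multiset.card_erase_of_mem h0]
        exact Nat.succ_pred_eq_of_pos (by omega)
      · have := Multiset.cons_erase h0
        calc (σ.erase 0).sum = 0 + (σ.erase 0).sum := by rw [zero_add]
          _ = (0 ::ₘ σ.erase 0).sum := by rw [Multiset.sum_cons]
          _ = σ.sum := by rw [this]
    · have h0c : σ.count 0 = 0 := by
        simpa [Multiset.count_eq_zero] using h0
      have hzc : ∀ g, σ.count g ≤ z := fun g =>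
        le_trans (Multiset.le_iff_count.mp hσγ g) (hmult g)
      obtain ⟨ρ, hρσ, hρ0, hρz, hρsum⟩ := claimB z σ h0c hzc (by omega)
      have hρpos : 0 < Multiset.card ρ := Multiset.card_pos.mpr hρ0
      refine ⟨(σ - ρ) + Multiset.replicate (Multiset.card ρ - 1) 0, ?_, ?_, ?_⟩
      · rw [Multiset.le_iff_count]
        intro g
        rw [Multiset.count_add, Multiset.count_replicate]
        by_cases hg : g = 0
        · subst hg
          have h1 : (σ - ρ).count 0 ≤ σ.count 0 :=
            Multiset.le_iff_count.mp (Multiset.sub_le_self σ ρ) 0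
          rw [if_pos rfl]
          omega
        · rw [if_neg (fun h => hg h.symm), add_zero]
          exact le_trans (Multiset.le_iff_count.mp (Multiset.sub_le_self σ ρ) g)
            (Multiset.le_iff_count.mp hσγ g)
      · rw [Multiset.card_add, Multiset.card_replicate,
          Multiset.card_sub hρσ]
        have := Multiset.card_le_card hρσ
        omega
      · rw [Multiset.sum_add, Multiset.sum_replicate, smul_zero, add_zero]
        have hsplit : σ - ρ + ρ = σ := tsub_add_cancel_of_le hρσ
        have : (σ - ρ).sum + ρ.sum = σ.sum := by
          rw [← Multiset.sum_add, hsplit]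
        rw [hρsum, add_zero] at this
        exact this
  have main : ∀ m, ∀ σ, σ ≤ γ → Multiset.card σ = n + m + 1 →
      ∃ τ ≤ γ, Multiset.card τ = n ∧ τ.sum = σ.sum := by
    intro m
    induction m with
    | zero =>
      intro σ hσγ hc
      obtain ⟨σ', hσ'γ, hσ'c, hσ's⟩ := step σ hσγ (by omega)
      exact ⟨σ', hσ'γ, by omega, hσ's⟩
    | succ m ih =>
      intro σ hσγ hc
      obtain ⟨σ', hσ'γ, hσ'c, hσ's⟩ := step σ hσγ (by omega)
      obtain ⟨τ, hτγ, hτc, hτs⟩ := ih σ' hσ'γ (by omega)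
      exact ⟨τ, hτγ, hτc, by rw [hτs, hσ's]⟩
  intro σ hσγ hσn
  exact main (Multiset.card σ - n - 1) σ hσγ (by omega)
end

section
/- Let α be a finite sequence of positive integers of length ℓ and sum S with 2ℓ > S. Then every integer x in the interval [2ℓ − S, S] is representable as the sum of a subsequence of α of length at least 2ℓ − S. -/
lemma card_le_sum' (α : Multiset ℕ) (h : ∀ a ∈ α, 0 < a) : Multiset.card α ≤ α.sum := by
  induction α using Multiset.induction with
  | empty => simp
  | cons a s ih =>
    have h1 := h a (by simp)
    have h2 := ih (fun b hb => h b (by simp [hb]))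
    simp only [Multiset.card_cons, Multiset.sum_cons]
    omega

lemma key_lemma (α : Multiset ℕ) : (∀ a ∈ α, 0 < a) → ∀ z j : ℕ,
    α.sum < 2 * Multiset.card α → z ≤ α.sum →
    z + 2 * Multiset.card α ≤ 2 * α.sum + j →
    ∃ ρ, ρ ≤ α ∧ ρ.sum = z ∧ Multiset.card ρ + Multiset.card α ≤ α.sum + j := by
  induction α using Multiset.strongInductionOn with
  | ih α IH =>
    intro hpos z j hD hz1 hz2
    by_cases hone : ∃ a ∈ α, 2 ≤ a
    · obtain ⟨a, ha, ha2⟩ := hone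
      have hcons := Multiset.cons_erase ha
      have hS : α.sum = a + (α.erase a).sum := by
        conv_lhs => rw [← hcons]
        rw [Multiset.sum_cons]
      have hL : Multiset.card α = Multiset.card (α.erase a) + 1 := by
        conv_lhs => rw [← hcons]
        rw [Multiset.card_cons]
      have hlt : α.erase a < α := by
        conv_rhs => rw [← hcons]
        exact Multiset.lt_cons_self _ _
      have hpos' : ∀ b ∈ α.erase a, 0 < b :=
        fun b hb => hpos b (Multiset.mem_of_le (Multiset.erase_le a α) hb)
      have hcls : Multiset.card (α.erase a) ≤ (α.erase a).sum := card_le_sum' _ hpos'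
      by_cases hza : a ≤ z
      · obtain ⟨ρ', hρ'le, hρ's, hρ'c⟩ :=
          IH (α.erase a) hlt hpos' (z - a) (j + a - 2) (by omega) (by omega) (by omega)
        refine ⟨a ::ₘ ρ', ?_, ?_, ?_⟩
        · conv_rhs => rw [← hcons]
          exact Multiset.cons_le_cons a hρ'le
        · rw [Multiset.sum_cons, hρ's]; omega
        · rw [Multiset.card_cons]; omega
      · obtain ⟨ρ', hρ'le, hρ's, hρ'c⟩ :=
          IH (α.erase a) hlt hpos' z (j + a - 1) (by omega) (by omega) (by omega)
        exact ⟨ρ', hρ'le.trans (Multiset.erase_le a α), hρ's, by omega⟩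
    · push_neg at hone
      have hall : α = Multiset.replicate (Multiset.card α) 1 :=
        Multiset.eq_replicate_card.mpr
          (fun b hb => by have := hpos b hb; have := hone b hb; omega)
      have hsum : α.sum = Multiset.card α := by
        conv_lhs => rw [hall]
        simp [Multiset.sum_replicate]
      refine ⟨Multiset.replicate z 1, ?_, ?_, ?_⟩
      · rw [hall]
        exact (Multiset.replicate_le_replicate 1).mpr (by omega)
      · simp [Multiset.sum_replicate]
      · simp only [Multiset.card_replicate]; omega

/-- Let `α` be a sequence of positive integers of length `ℓ` and sum `S` with `2ℓ > S`.
Every integer `x` in `[2ℓ − S, S]` is the sum of a subsequence of `α` of length at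
least `2ℓ − S`. -/
theorem subsequence_sum_representable (α : Multiset ℕ) (hpos : ∀ a ∈ α, 0 < a)
    (h : α.sum < 2 * Multiset.card α) (x : ℕ)
    (hx1 : 2 * Multiset.card α - α.sum ≤ x) (hx2 : x ≤ α.sum) :
    ∃ ω ≤ α, 2 * Multiset.card α - α.sum ≤ Multiset.card ω ∧ ω.sum = x := by
  obtain ⟨ρ, hle, hsum, hcard⟩ := key_lemma α hpos (α.sum - x) 0 h (by omega) (by omega)
  have hadd : α - ρ + ρ = α := tsub_add_cancel_of_le hle
  have hs : (α - ρ).sum + ρ.sum = α.sum := by rw [← Multiset.sum_add, hadd]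
  have hc : Multiset.card (α - ρ) + Multiset.card ρ = Multiset.card α := by
    rw [← Multiset.card_add, hadd]
  exact ⟨α - ρ, Multiset.sub_le_self _ _, by omega, by omega⟩
end

section
/- Let n and k be integers with 0 < k < n, and let α and β be sequences in Z_n with |α| + |β| = n − 1 + k, L(α) < n and L(1 − β) < n. Then the union α ∪ β contains no subsequence of length n whose sum is zero; that is, α ∪ β is n-zero-free. -/
/-- The least positive representative of `a : ZMod n`: the unique integer in `[1, n]`
congruent to `a` modulo `n`. -/
def lpr {n : ℕ} (a : ZMod n) : ℕ := if a = 0 then n else ZMod.val a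

/-- `Lsum α` is the sum of the least positive representatives of the terms of `α`. -/
def Lsum {n : ℕ} (α : Multiset (ZMod n)) : ℕ := (α.map lpr).sum

/-- `γ` is `n`-zero-free: it has no subsequence of length `n` with sum zero. -/
def NZeroFree {n : ℕ} (γ : Multiset (ZMod n)) : Prop :=
  ∀ σ ≤ γ, Multiset.card σ = n → σ.sum ≠ 0

/-!
Suppose `σ ≤ α + β` has `n` terms and sum zero, and split it as `σ₁ + σ₂` with `σ₁ ≤ α`,
`σ₂ ≤ β`. Reducing modulo `n`, `L(σ₁) ≡ Σσ₁` and `L(1 - σ₂) ≡ |σ₂| - Σσ₂ ≡ Σσ₁ - |σ₁|`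
(as `|σ₁| + |σ₂| = n` and `Σσ₁ + Σσ₂ = 0`), so `L(1 - σ₂) ≡ L(σ₁) - |σ₁|`. Both sides lie in
`[0, n)`, hence they are equal, and since every least positive representative is at least `1`,
`n = |σ₁| + |σ₂| ≤ |σ₁| + L(1 - σ₂) = L(σ₁) ≤ L(α) < n`.
-/

lemma Multiset.exists_eq_add_of_le_add {α : Type*} [DecidableEq α] {s t u : Multiset α}
    (h : s ≤ t + u) : ∃ s₁ ≤ t, ∃ s₂ ≤ u, s = s₁ + s₂ :=
  ⟨s ∩ t, inter_le_right, s - t, Multiset.sub_le_iff_le_add'.2 h,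
    by rw [Multiset.add_comm, sub_add_inter]⟩

variable {n : ℕ}

lemma one_le_lpr [NeZero n] (a : ZMod n) : 1 ≤ lpr a := by
  unfold lpr
  split_ifs with ha
  · exact NeZero.one_le
  · exact Nat.one_le_iff_ne_zero.mpr ((ZMod.val_ne_zero a).mpr ha)

lemma natCast_lpr [NeZero n] (a : ZMod n) : (lpr a : ZMod n) = a := by
  unfold lpr
  split_ifs with ha <;> simp [ha]

lemma natCast_Lsum [NeZero n] (σ : Multiset (ZMod n)) : (Lsum σ : ZMod n) = σ.sum := by
  simp [Lsum, Nat.cast_multiset_sum, natCast_lpr]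

lemma natCast_Lsum_one_sub [NeZero n] (σ : Multiset (ZMod n)) :
    (Lsum (σ.map (1 - ·)) : ZMod n) = Multiset.card σ - σ.sum := by
  rw [natCast_Lsum, Multiset.sum_map_sub]
  simp

lemma card_le_Lsum [NeZero n] (σ : Multiset (ZMod n)) : Multiset.card σ ≤ Lsum σ := by
  simpa [Lsum] using Multiset.card_nsmul_le_sum (s := σ.map lpr) (a := 1)
    (by simpa using fun a _ ↦ one_le_lpr a)

lemma Lsum_mono {σ τ : Multiset (ZMod n)} (h : σ ≤ τ) : Lsum σ ≤ Lsum τ := by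
  obtain ⟨u, rfl⟩ := Multiset.le_iff_exists_add.mp h
  simp [Lsum]

lemma sum_add_ne_zero_of_Lsum_lt [NeZero n] {σ τ : Multiset (ZMod n)}
    (hcard : Multiset.card σ + Multiset.card τ = n) (hσ : Lsum σ < n)
    (hτ : Lsum (τ.map (1 - ·)) < n) : (σ + τ).sum ≠ 0 := by
  intro hsum
  have hmod : Lsum (τ.map (1 - ·)) ≡ Lsum σ - Multiset.card σ [MOD n] := by
    rw [← ZMod.natCast_eq_natCast_iff, natCast_Lsum_one_sub, Nat.cast_sub (card_le_Lsum σ),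
      natCast_Lsum]
    have hn : ((Multiset.card σ + Multiset.card τ : ℕ) : ZMod n) = 0 := by
      rw [hcard, ZMod.natCast_self]
    rw [Multiset.sum_add] at hsum
    push_cast at hn
    linear_combination hn - hsum
  have heq := hmod.eq_of_lt_of_lt hτ (by omega)
  have hτcard := card_le_Lsum (τ.map (1 - ·))
  rw [Multiset.card_map] at hτcard
  have hσcard := card_le_Lsum σ
  omega

theorem separable_is_n_zero_free_general (n : ℕ)
    (α β : Multiset (ZMod n))
    (hα : Lsum α < n) (hβ : Lsum (β.map (fun b => 1 - b)) < n) :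
    NZeroFree (α + β) := by
  have : NeZero n := ⟨by omega⟩
  classical
  intro σ hσ hcard
  obtain ⟨σ₁, hσ₁, σ₂, hσ₂, rfl⟩ := Multiset.exists_eq_add_of_le_add hσ
  rw [Multiset.card_add] at hcard
  exact sum_add_ne_zero_of_Lsum_lt hcard ((Lsum_mono hσ₁).trans_lt hα)
    ((Lsum_mono (Multiset.map_le_map hσ₂)).trans_lt hβ)

/-- If `|α| + |β| = n − 1 + k` with `0 < k < n`, `L(α) < n` and `L(1 − β) < n`, then
`α ∪ β` is `n`-zero-free. -/
theorem separable_is_n_zero_free (n k : ℕ) (hk : 0 < k) (hkn : k < n)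
    (α β : Multiset (ZMod n))
    (hlen : Multiset.card α + Multiset.card β = n - 1 + k)
    (hα : Lsum α < n) (hβ : Lsum (β.map (fun b => 1 - b)) < n) :
    NZeroFree (α + β) :=
  separable_is_n_zero_free_general n α β hα hβ
end

section
/- Let n and k be integers with 0 < k < n, and let α and β be sequences in Z_n with |α| + |β| = n − 1 + k, L(α) < n and L(1 − β) < n. Let u and v denote the multiplicities of 1 and 0 in α ∪ β. Then u + v = 2k holds if and only if there exist integers p and q with (n−1)/2 ≤ p < n, (n−1)/2 ≤ q < n and p + q = n − 1 + k such that α is the sequence consisting of the element 1 with multiplicity 2p − n + 1 and the element 2 with multiplicity n − 1 − p, and β is the sequence consisting of the element 0 with multiplicity 2q − n + 1 and the element −1 with multiplicity n − 1 − q. -/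
lemma lpr_pos {n : ℕ} (hn : 2 ≤ n) (x : ZMod n) : 1 ≤ lpr x := by
  haveI : NeZero n := ⟨by omega⟩
  unfold lpr
  split
  · omega
  · rename_i h
    rcases Nat.eq_zero_or_pos (ZMod.val x) with h0 | h0
    · exact absurd ((ZMod.val_eq_zero x).1 h0) h
    · omega

lemma lpr_eq_one_iff {n : ℕ} (hn : 2 ≤ n) (x : ZMod n) : lpr x = 1 ↔ x = 1 := by
  haveI : Fact (1 < n) := ⟨by omega⟩
  unfold lpr
  split
  · rename_i h
    constructor
    · omega
    · rintro rfl; exact absurd h one_ne_zero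
  · rw [ZMod.val_eq_one (by omega) x]

lemma two_le_lpr {n : ℕ} (hn : 2 ≤ n) (x : ZMod n) (hx : x ≠ 1) : 2 ≤ lpr x := by
  rcases Nat.lt_or_ge (lpr x) 2 with h | h
  · have h1 := lpr_pos hn x
    have h2 : lpr x = 1 := by omega
    exact absurd ((lpr_eq_one_iff hn x).1 h2) hx
  · exact h

lemma eq_two_of_lpr_eq_two {n : ℕ} (hn : 2 ≤ n) (x : ZMod n) (hx : lpr x = 2) : x = 2 := by
  haveI : NeZero n := ⟨by omega⟩
  unfold lpr at hx
  split at hx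
  · rename_i h
    subst h
    have : ((2:ℕ) : ZMod n) = 0 := by rw [← hx]; exact ZMod.natCast_self n
    rw [show ((2:ℕ) : ZMod n) = (2 : ZMod n) by push_cast; ring] at this
    rw [this]
  · have := ZMod.natCast_rightInverse (n := n) x
    rw [hx] at this
    rw [← this]; push_cast; ring

lemma lpr_zero {n : ℕ} : lpr (0 : ZMod n) = n := by unfold lpr; simp

lemma Lsum_cons {n : ℕ} (x : ZMod n) (γ : Multiset (ZMod n)) :
    Lsum (x ::ₘ γ) = lpr x + Lsum γ := by
  unfold Lsum; simp

lemma le_Lsum_of_mem {n : ℕ} {x : ZMod n} {γ : Multiset (ZMod n)} (hn : 2 ≤ n)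
    (h : x ∈ γ) : lpr x ≤ Lsum γ := by
  rw [← Multiset.cons_erase h, Lsum_cons]
  omega

lemma lsum_lb {n : ℕ} (hn : 2 ≤ n) (γ : Multiset (ZMod n)) :
    γ.count 1 + 2 * (Multiset.card γ - γ.count 1) ≤ Lsum γ := by
  induction γ using Multiset.induction_on with
  | empty => simp [Lsum]
  | cons x γ ih =>
    have hcle : γ.count 1 ≤ Multiset.card γ := Multiset.count_le_card _ _
    rw [Lsum_cons]
    by_cases hx : x = (1 : ZMod n)
    · subst hx
      have hl1 : lpr (1 : ZMod n) = 1 := (lpr_eq_one_iff hn 1).2 rfl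
      rw [Multiset.count_cons_self, Multiset.card_cons]
      omega
    · have hl2 : 2 ≤ lpr x := two_le_lpr hn x hx
      rw [Multiset.count_cons_of_ne (Ne.symm hx), Multiset.card_cons]
      omega

lemma mem_one_two_of_lsum_le {n : ℕ} (hn : 2 ≤ n) (γ : Multiset (ZMod n))
    (h : Lsum γ ≤ γ.count 1 + 2 * (Multiset.card γ - γ.count 1)) :
    ∀ x ∈ γ, x = 1 ∨ x = 2 := by
  induction γ using Multiset.induction_on with
  | empty => simp
  | cons y γ ih =>
    have hcle : γ.count 1 ≤ Multiset.card γ := Multiset.count_le_card _ _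
    have hlb := lsum_lb hn γ
    rw [Lsum_cons] at h
    intro x hx
    by_cases hy : y = (1 : ZMod n)
    · subst hy
      rw [Multiset.count_cons_self, Multiset.card_cons] at h
      have hl1 : lpr (1 : ZMod n) = 1 := (lpr_eq_one_iff hn 1).2 rfl
      rcases Multiset.mem_cons.1 hx with rfl | hx'
      · left; rfl
      · exact ih (by omega) x hx'
    · have hl2 : 2 ≤ lpr y := two_le_lpr hn y hy
      rw [Multiset.count_cons_of_ne (Ne.symm hy), Multiset.card_cons] at h
      rcases Multiset.mem_cons.1 hx with rfl | hx'
      · right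
        exact eq_two_of_lpr_eq_two hn x (by omega)
      · exact ih (by omega) x hx'

lemma two_ne_one' {n : ℕ} (hn : 2 ≤ n) : (2 : ZMod n) ≠ 1 := by
  haveI : Fact (1 < n) := ⟨by omega⟩
  intro h
  have h2 : (2 : ZMod n) - 1 = 0 := by rw [h]; ring
  have : (1 : ZMod n) = 0 := by rw [← h2]; ring
  exact one_ne_zero this

lemma eq_repl {n : ℕ} (hn : 2 ≤ n) (γ : Multiset (ZMod n)) :
    ∀ a m : ℕ, γ.count 1 = a → Multiset.card γ = m → (∀ x ∈ γ, x = 1 ∨ x = 2) →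
    γ = Multiset.replicate a 1 + Multiset.replicate (m - a) 2 := by
  induction γ using Multiset.induction_on with
  | empty => intro a m ha hm _; simp at ha hm; subst ha; subst hm; simp
  | cons y γ ih =>
    intro a m ha hm hmem
    have hcle : γ.count 1 ≤ Multiset.card γ := Multiset.count_le_card _ _
    have hγmem : ∀ x ∈ γ, x = 1 ∨ x = 2 := fun x hx => hmem x (Multiset.mem_cons_of_mem hx)
    obtain ⟨c, hc⟩ : ∃ c, γ.count 1 = c := ⟨_, rfl⟩
    obtain ⟨s, hs⟩ : ∃ s, Multiset.card γ - γ.count 1 = s := ⟨_, rfl⟩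
    have hγ := ih c (Multiset.card γ) hc rfl hγmem
    rw [hc] at hs
    rw [hs] at hγ
    rw [Multiset.card_cons] at hm
    rcases hmem y (Multiset.mem_cons_self _ _) with rfl | rfl
    · rw [Multiset.count_cons_self, hc] at ha
      have hma : m - a = s := by omega
      have haa : a = c + 1 := by omega
      rw [hma, haa, Multiset.replicate_succ, Multiset.cons_add, hγ]
    · rw [Multiset.count_cons_of_ne (Ne.symm (two_ne_one' hn)), hc] at ha
      have hma : m - a = s + 1 := by omega
      have haa : a = c := by omega
      rw [hma, haa, Multiset.replicate_succ, hγ,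
        add_comm (Multiset.replicate c (1 : ZMod n)) (Multiset.replicate s (2 : ZMod n)),
        ← Multiset.cons_add]
      exact add_comm _ _


/-- With `|α| + |β| = n − 1 + k`, `0 < k < n`, `L(α) < n`, `L(1 − β) < n`, and `u`, `v`
the multiplicities of `1` and `0` in `α ∪ β`: the equality `u + v = 2k` holds iff
`α = 1^(2p−n+1) 2^(n−1−p)` and `β = 0^(2q−n+1) (−1)^(n−1−q)` for some integers `p, q`
with `(n−1)/2 ≤ p < n`, `(n−1)/2 ≤ q < n` and `p + q = n − 1 + k`. -/
theorem separable_equality_u_plus_v (n k : ℕ) (hk : 0 < k) (hkn : k < n)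
    (α β : Multiset (ZMod n))
    (hlen : Multiset.card α + Multiset.card β = n - 1 + k)
    (hα : Lsum α < n) (hβ : Lsum (β.map (fun b => 1 - b)) < n)
    (u v : ℕ) (hu : u = (α + β).count 1) (hv : v = (α + β).count 0) :
    u + v = 2 * k ↔
      ∃ p q : ℕ, n - 1 ≤ 2 * p ∧ p < n ∧ n - 1 ≤ 2 * q ∧ q < n ∧ p + q = n - 1 + k ∧
        α = Multiset.replicate (2 * p + 1 - n) (1 : ZMod n) +
            Multiset.replicate (n - 1 - p) (2 : ZMod n) ∧
        β = Multiset.replicate (2 * q + 1 - n) (0 : ZMod n) +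
            Multiset.replicate (n - 1 - q) (-1 : ZMod n) := by
  have hn : 2 ≤ n := by omega
  haveI : Fact (1 < n) := ⟨by omega⟩
  set β' : Multiset (ZMod n) := β.map (fun b => 1 - b) with hβ'def
  have hinj : Function.Injective (fun b : ZMod n => 1 - b) := by
    intro x y h
    have := congrArg (fun z : ZMod n => 1 - z) h
    simpa [sub_sub_cancel] using this
  have hcardβ' : Multiset.card β' = Multiset.card β := by simp [hβ'def]
  have hβrec : β = β'.map (fun b => 1 - b) := by
    rw [hβ'def, Multiset.map_map]
    simp [Function.comp]
  have hc1β : β'.count 1 = β.count 0 := by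
    have := Multiset.count_map_eq_count' (fun b : ZMod n => 1 - b) β hinj 0
    simpa using this
  have hc0β' : β'.count 0 = β.count 1 := by
    have := Multiset.count_map_eq_count' (fun b : ZMod n => 1 - b) β hinj 1
    simpa using this
  have hα0 : α.count 0 = 0 := by
    rw [Multiset.count_eq_zero]
    intro hmem
    have := le_Lsum_of_mem hn hmem
    rw [lpr_zero] at this; omega
  have hβ'0 : β.count 1 = 0 := by
    rw [← hc0β', Multiset.count_eq_zero]
    intro hmem
    have := le_Lsum_of_mem hn hmem
    rw [lpr_zero] at this; omega
  have hU : u = α.count 1 := by rw [hu, Multiset.count_add, hβ'0]; omega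
  have hV : v = β'.count 1 := by rw [hv, Multiset.count_add, hα0, hc1β]; omega
  constructor
  · intro huv
    rw [hU, hV] at huv
    have hla := lsum_lb hn α
    have hlb := lsum_lb hn β'
    have hca := Multiset.count_le_card (1 : ZMod n) α
    have hcb := Multiset.count_le_card (1 : ZMod n) β'
    have key1 : Lsum α = α.count 1 + 2 * (Multiset.card α - α.count 1) := by omega
    have key2 : Lsum β' = β'.count 1 + 2 * (Multiset.card β' - β'.count 1) := by omega
    have hαs := eq_repl hn α (α.count 1) (Multiset.card α) rfl rfl
      (mem_one_two_of_lsum_le hn α key1.le)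
    have hβ's := eq_repl hn β' (β'.count 1) (Multiset.card β') rfl rfl
      (mem_one_two_of_lsum_le hn β' key2.le)
    obtain ⟨a, ha⟩ : ∃ a, α.count 1 = a := ⟨_, rfl⟩
    obtain ⟨b, hb⟩ : ∃ b, β'.count 1 = b := ⟨_, rfl⟩
    obtain ⟨s, hs⟩ : ∃ s, Multiset.card α - α.count 1 = s := ⟨_, rfl⟩
    obtain ⟨t, ht⟩ : ∃ t, Multiset.card β' - β'.count 1 = t := ⟨_, rfl⟩
    rw [hs, ha] at hαs
    rw [ht, hb] at hβ's
    have h1 : a + 2 * s = n - 1 := by omega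
    have h2 : b + 2 * t = n - 1 := by omega
    have hab : a + b = 2 * k := by omega
    have hst : s ≤ Multiset.card α ∧ t ≤ Multiset.card β' := by omega
    refine ⟨n - 1 - s, n - 1 - t, by omega, by omega, by omega, by omega, by omega, ?_, ?_⟩
    · rw [show 2 * (n - 1 - s) + 1 - n = a by omega, show n - 1 - (n - 1 - s) = s by omega]
      exact hαs
    · rw [show 2 * (n - 1 - t) + 1 - n = b by omega, show n - 1 - (n - 1 - t) = t by omega]
      rw [hβrec, hβ's, Multiset.map_add, Multiset.map_replicate, Multiset.map_replicate]
      have e1 : (1 : ZMod n) - 1 = 0 := by ring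
      have e2 : (1 : ZMod n) - 2 = -1 := by ring
      simp only [e1, e2]
  · rintro ⟨p, q, hp1, hp2, hq1, hq2, hpq, hαe, hβe⟩
    subst hαe hβe hu hv
    by_cases hn2 : n = 2
    · subst hn2
      have hp : p = 1 := by omega
      have hq : q = 1 := by omega
      have hk1 : k = 1 := by omega
      subst hp hq hk1
      decide
    · have hn3 : 3 ≤ n := by omega
      have e10 : (1 : ZMod n) ≠ 0 := one_ne_zero
      have e20 : (2 : ZMod n) ≠ 0 := by
        intro h
        have h' : ((2 : ℕ) : ZMod n) = 0 := by push_cast; exact h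
        have hdvd := (ZMod.natCast_eq_zero_iff 2 n).1 h'
        have := Nat.le_of_dvd (by norm_num) hdvd
        omega
      have e21 : (2 : ZMod n) ≠ 1 := two_ne_one' hn
      have en1 : (-1 : ZMod n) ≠ 1 := by
        intro h
        exact e20 (by linear_combination -h)
      have en0 : (-1 : ZMod n) ≠ 0 := by
        intro h
        exact e10 (by linear_combination -h)
      simp only [Multiset.count_add, Multiset.count_replicate, if_pos]
      simp only [e10, e20, e21, en1, en0, Ne.symm e10, if_true, if_false, ite_true, ite_false,
        if_neg, reduceIte]
      simp [e10, e20, e21, en1, en0, Ne.symm e10]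
      omega
end

section
/- Let n and k be integers with n/2 < k < n. If n and k have different parity, there exists an n-zero-free sequence of length n − 1 + k in Z_n whose maximum term multiplicity is exactly k, namely the sequence consisting of 0 with multiplicity k, 1 with multiplicity k, 2 with multiplicity (n−1−k)/2 and −1 with multiplicity (n−1−k)/2. If n and k have the same parity, there exists an n-zero-free sequence of length n − 1 + k in Z_n whose maximum term multiplicity is exactly k + 1, namely the sequence consisting of 0 with multiplicity k+1, 1 with multiplicity k−1, 2 with multiplicity (n−k)/2 and −1 with multiplicity (n−k−2)/2. -/
open Multiset

theorem Multiset.exists_le_le_eq_add_of_le_add {α : Type*} [DecidableEq α] {σ s t : Multiset α}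
    (h : σ ≤ s + t) : ∃ u ≤ s, ∃ v ≤ t, σ = u + v := by
  refine ⟨σ ∩ s, inter_le_right, σ - s, Multiset.sub_le_iff_le_add'.mpr h, ?_⟩
  ext a
  have := le_iff_count.mp h a
  simp only [count_add, count_inter, count_sub] at this ⊢
  omega

abbrev zeroOneTwoNegOneSeq (n A B C D : ℕ) : Multiset (ZMod n) :=
  replicate A 0 + replicate B 1 + replicate C 2 + replicate D (-1)

section zeroOneTwoNegOneSeq

variable {n A B C D : ℕ}

theorem exists_eq_zeroOneTwoNegOneSeq_of_le {σ : Multiset (ZMod n)}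
    (h : σ ≤ zeroOneTwoNegOneSeq n A B C D) :
    ∃ a ≤ A, ∃ b ≤ B, ∃ c ≤ C, ∃ d ≤ D, σ = zeroOneTwoNegOneSeq n a b c d := by
  obtain ⟨σ₃, h₃, δ, hδ, rfl⟩ := exists_le_le_eq_add_of_le_add h
  obtain ⟨σ₂, h₂, γ, hγ, rfl⟩ := exists_le_le_eq_add_of_le_add h₃
  obtain ⟨α, hα, β, hβ, rfl⟩ := exists_le_le_eq_add_of_le_add h₂
  obtain ⟨a, ha, rfl⟩ := le_replicate_iff.mp hα
  obtain ⟨b, hb, rfl⟩ := le_replicate_iff.mp hβ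
  obtain ⟨c, hc, rfl⟩ := le_replicate_iff.mp hγ
  obtain ⟨d, hd, rfl⟩ := le_replicate_iff.mp hδ
  exact ⟨a, ha, b, hb, c, hc, d, hd, rfl⟩

theorem card_zeroOneTwoNegOneSeq : card (zeroOneTwoNegOneSeq n A B C D) = A + B + C + D := by
  simp only [card_add, card_replicate]

theorem sum_zeroOneTwoNegOneSeq :
    (zeroOneTwoNegOneSeq n A B C D).sum = ((B + 2 * C - D : ℤ) : ZMod n) := by
  simp only [sum_add, sum_replicate, smul_zero, nsmul_eq_mul, mul_one, zero_add]
  push_cast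
  ring

theorem nZeroFree_zeroOneTwoNegOneSeq (hA : A + 2 * D < n) (hB : B + 2 * C < n) :
    NZeroFree (zeroOneTwoNegOneSeq n A B C D) := by
  intro σ hσ hcard hsum
  obtain ⟨a, ha, b, hb, c, hc, d, hd, rfl⟩ := exists_eq_zeroOneTwoNegOneSeq_of_le hσ
  rw [card_zeroOneTwoNegOneSeq] at hcard
  rw [sum_zeroOneTwoNegOneSeq, ZMod.intCast_zmod_eq_zero_iff_dvd] at hsum
  have : (b + 2 * c - d : ℤ) = 0 :=
    Int.eq_zero_of_abs_lt_dvd hsum (abs_lt.mpr ⟨by omega, by omega⟩)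
  omega

theorem ZMod.two_ne_zero_of_three_le (hn : 3 ≤ n) : (2 : ZMod n) ≠ 0 := by
  rw [← Nat.cast_ofNat, Ne, ZMod.natCast_eq_zero_iff]
  intro h
  have := Nat.le_of_dvd two_pos h
  omega

theorem count_zero_zeroOneTwoNegOneSeq (hn : 3 ≤ n) :
    count 0 (zeroOneTwoNegOneSeq n A B C D) = A := by
  have : Fact (1 < n) := ⟨by omega⟩
  simp [count_replicate, ZMod.two_ne_zero_of_three_le hn]

/-- The bound is on `C + D` because `2 = -1` in `ZMod 3`. -/
theorem count_zeroOneTwoNegOneSeq_le (hn : 3 ≤ n) {m : ℕ} (hA : A ≤ m) (hB : B ≤ m)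
    (hCD : C + D ≤ m) (x : ZMod n) : count x (zeroOneTwoNegOneSeq n A B C D) ≤ m := by
  have : Fact (1 < n) := ⟨by omega⟩
  have h10 : (1 : ZMod n) ≠ 0 := one_ne_zero
  have hn0 : (-1 : ZMod n) ≠ 0 := neg_ne_zero.mpr h10
  have h20 := ZMod.two_ne_zero_of_three_le hn
  have h21 : (2 : ZMod n) ≠ 1 := fun h ↦ one_ne_zero (by linear_combination h)
  have hn1 : (-1 : ZMod n) ≠ 1 := fun h ↦ h20 (by linear_combination -h)
  simp only [count_add, count_replicate]
  split_ifs <;> subst_vars <;> simp_all <;> omega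

end zeroOneTwoNegOneSeq

/-- Sharpness of the multiplicity bounds: for `n/2 < k < n`, the explicit sequences
`0^k 1^k 2^((n−1−k)/2) (−1)^((n−1−k)/2)` (different parity) and
`0^(k+1) 1^(k−1) 2^((n−k)/2) (−1)^((n−k−2)/2)` (same parity) are `n`-zero-free of
length `n − 1 + k` with maximum term multiplicity exactly `k`, resp. `k + 1`. -/
theorem high_multiplicity_sharp (n k : ℕ) (h1 : n < 2 * k) (h2 : k < n) :
    (n % 2 ≠ k % 2 →
      let γ : Multiset (ZMod n) :=
        Multiset.replicate k (0 : ZMod n) + Multiset.replicate k (1 : ZMod n) +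
        Multiset.replicate ((n - 1 - k) / 2) (2 : ZMod n) +
        Multiset.replicate ((n - 1 - k) / 2) (-1 : ZMod n)
      NZeroFree γ ∧ Multiset.card γ = n - 1 + k ∧
        (∀ x : ZMod n, γ.count x ≤ k) ∧ (∃ x : ZMod n, γ.count x = k)) ∧
    (n % 2 = k % 2 →
      let γ : Multiset (ZMod n) :=
        Multiset.replicate (k + 1) (0 : ZMod n) + Multiset.replicate (k - 1) (1 : ZMod n) +
        Multiset.replicate ((n - k) / 2) (2 : ZMod n) +
        Multiset.replicate ((n - k - 2) / 2) (-1 : ZMod n)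
      NZeroFree γ ∧ Multiset.card γ = n - 1 + k ∧
        (∀ x : ZMod n, γ.count x ≤ k + 1) ∧ (∃ x : ZMod n, γ.count x = k + 1)) := by
  have hn : 3 ≤ n := by omega
  refine ⟨fun hpar ↦ ?_, fun hpar ↦ ?_⟩
  all_goals
    refine ⟨nZeroFree_zeroOneTwoNegOneSeq (by omega) (by omega), ?_,
      count_zeroOneTwoNegOneSeq_le hn (by omega) (by omega) (by omega),
      ⟨0, count_zero_zeroOneTwoNegOneSeq hn⟩⟩
    rw [card_zeroOneTwoNegOneSeq]
    omega
end

section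
/- Let k ≥ 2 be an even integer and n an integer with n ≥ (k² + 2k)/8 + 1. Then the sequence in Z_n consisting of the elements −(k−2)/2, …, −1 each with multiplicity 1, the element 0 with multiplicity n − (k²+2k)/8, the element 1 with multiplicity n − (k²+2k)/8, and the elements 2, …, k/2 each with multiplicity 1, is an n-zero-free sequence of length 2n − 2 − ⌊((k−1)/2)²⌋ containing exactly k distinct elements. -/
/-!
Write `k = 2q + 2` and `m = n - (k² + 2k)/8`, and lift the sequence to the integers
`-q, …, q + 1`. With `N = 2 + 3 + ⋯ + (q + 1)` we have `n = m + N + 1`. The positive terms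
sum to `m + N` and the negative ones to `-(1 + ⋯ + q) ≥ -N`, so the integer sum of a
subsequence lies strictly between `-n` and `n`, and it is `0` in `ZMod n` only if it is `0`.
In that case its length equals `∑ (1 - x)`, and `1 - x` is positive only at the zeros
(weight `1`) and at the negative terms `-(i + 1)` (weight `i + 2`), so the length is at most
`m + N < n`.
-/

open Multiset

namespace Multiset

variable {α β : Type*}

theorem exists_le_map_eq [DecidableEq α] [DecidableEq β] {f : α → β} {s : Multiset α}
    {σ : Multiset β} (h : σ ≤ s.map f) : ∃ τ ≤ s, σ = τ.map f := by
  induction σ using Multiset.induction_on generalizing s with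
  | empty => exact ⟨0, zero_le _, rfl⟩
  | cons b σ ih =>
    obtain ⟨a, ha, rfl⟩ := mem_map.mp (mem_of_le h (mem_cons_self _ _))
    obtain ⟨τ, hτ, rfl⟩ := ih (s := s.erase a) <| by
      simpa [map_erase_of_mem f s ha] using erase_le_erase (f a) h
    exact ⟨a ::ₘ τ, cons_erase ha ▸ cons_le_cons a hτ, (map_cons f a τ).symm⟩

theorem sum_map_le_sum_map_max_of_le [AddCommGroup β] [LinearOrder β] [IsOrderedAddMonoid β]
    {s t : Multiset α} (h : s ≤ t) (f : α → β) :
    (s.map f).sum ≤ (t.map fun x => max (f x) 0).sum := by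
  obtain ⟨u, rfl⟩ := le_iff_exists_add.mp h
  calc (s.map f).sum ≤ (s.map fun x => max (f x) 0).sum :=
        sum_map_le_sum_map _ _ fun x _ => le_max_left _ _
    _ ≤ ((s + u).map fun x => max (f x) 0).sum := by
        rw [map_add, sum_add, le_add_iff_nonneg_right]
        exact sum_nonneg fun y hy => by
          obtain ⟨x, -, rfl⟩ := mem_map.mp hy
          exact le_max_right _ _

end Multiset

theorem nZeroFree_map_intCast {n : ℕ} {γ : Multiset ℤ}
    (h : ∀ τ ≤ γ, card τ = n → τ.sum ≠ 0 ∧ |τ.sum| < n) :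
    NZeroFree (γ.map ((↑) : ℤ → ZMod n)) := by
  intro σ hσ hcard hsum
  obtain ⟨τ, hτ, rfl⟩ := exists_le_map_eq hσ
  rw [card_map] at hcard
  rw [← Int.cast_multiset_sum, ZMod.intCast_zmod_eq_zero_iff_dvd] at hsum
  obtain ⟨hne, hlt⟩ := h τ hτ hcard
  exact hne (Int.eq_zero_of_abs_lt_dvd hsum hlt)

theorem injOn_intCast_Ico (n : ℕ) (a : ℤ) :
    Set.InjOn ((↑) : ℤ → ZMod n) (Set.Ico a (a + n)) := by
  intro x hx y hy hxy
  rw [ZMod.intCast_eq_intCast_iff_dvd_sub] at hxy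
  have := Int.eq_zero_of_abs_lt_dvd hxy (abs_sub_lt_iff.mpr ⟨by grind, by grind⟩)
  omega

/-- The sequence of the theorem for `k = 2q + 2` and `m = n - (k² + 2k)/8`, lifted to `ℤ`. -/
def evenKSeq (q m : ℕ) : Multiset ℤ :=
  replicate m 0 + replicate m 1 + (range q).map (fun i : ℕ => -((i : ℤ) + 1)) +
    (range q).map (fun i : ℕ => (i : ℤ) + 2)

section
variable (q m : ℕ)

theorem card_evenKSeq : card (evenKSeq q m) = 2 * m + 2 * q := by
  simp only [evenKSeq, card_add, card_replicate, card_map, card_range]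
  ring

theorem sum_map_max_evenKSeq :
    ((evenKSeq q m).map fun x => max x 0).sum = m + ∑ i ∈ Finset.range q, ((i : ℤ) + 2) := by
  have h (i : ℕ) : max ((i : ℤ) + 2) 0 = i + 2 := max_eq_left (by positivity)
  simp [evenKSeq, h, Finset.sum_eq_multiset_sum]

theorem sum_map_max_neg_evenKSeq :
    ((evenKSeq q m).map fun x => max (-x) 0).sum = ∑ i ∈ Finset.range q, ((i : ℤ) + 1) := by
  have h (i : ℕ) : max ((i : ℤ) + 1) 0 = i + 1 := max_eq_left (by positivity)
  simp [evenKSeq, h, Finset.sum_eq_multiset_sum]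

theorem sum_map_max_one_sub_evenKSeq :
    ((evenKSeq q m).map fun x => max (1 - x) 0).sum =
      m + ∑ i ∈ Finset.range q, ((i : ℤ) + 2) := by
  have hneg (i : ℕ) : max (1 - (-1 + -(i : ℤ))) 0 = i + 2 := by omega
  have hpos (i : ℕ) : max (1 - ((i : ℤ) + 2)) 0 = 0 := by omega
  simp [evenKSeq, hneg, hpos, Finset.sum_eq_multiset_sum]

theorem toFinset_evenKSeq (hm : m ≠ 0) :
    (evenKSeq q m).toFinset = Finset.Ico (-q : ℤ) (q + 2) := by
  ext x
  simp only [evenKSeq, mem_toFinset, mem_add, mem_replicate, mem_map, Multiset.mem_range,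
    Finset.mem_Ico, ne_eq, hm, not_false_eq_true, true_and]
  constructor
  · rintro (((rfl | rfl) | ⟨i, hi, rfl⟩) | ⟨i, hi, rfl⟩) <;> omega
  · rintro ⟨hlo, hhi⟩
    obtain hx | rfl | rfl | hx : x < 0 ∨ x = 0 ∨ x = 1 ∨ 2 ≤ x := by omega
    · exact Or.inl (Or.inr ⟨(-x - 1).toNat, by omega, by omega⟩)
    · simp
    · simp
    · exact Or.inr ⟨(x - 2).toNat, by omega, by omega⟩
end

section
variable {q m : ℕ} {τ : Multiset ℤ}

theorem abs_sum_le_of_le_evenKSeq (hτ : τ ≤ evenKSeq q m) :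
    |τ.sum| ≤ m + ∑ i ∈ Finset.range q, ((i : ℤ) + 2) := by
  have hupper := sum_map_le_sum_map_max_of_le hτ fun x => x
  have hlower := sum_map_le_sum_map_max_of_le hτ fun x => -x
  rw [map_id', sum_map_max_evenKSeq] at hupper
  rw [sum_map_neg, map_id', sum_map_max_neg_evenKSeq] at hlower
  have : ∑ i ∈ Finset.range q, ((i : ℤ) + 1) ≤ ∑ i ∈ Finset.range q, ((i : ℤ) + 2) :=
    Finset.sum_le_sum fun i _ => by omega
  exact abs_le.mpr ⟨by omega, hupper⟩

theorem card_le_of_le_evenKSeq_of_sum_eq_zero (hτ : τ ≤ evenKSeq q m) (hsum : τ.sum = 0) :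
    (card τ : ℤ) ≤ m + ∑ i ∈ Finset.range q, ((i : ℤ) + 2) := by
  have h := sum_map_le_sum_map_max_of_le hτ (1 - ·)
  rwa [sum_map_max_one_sub_evenKSeq, sum_map_sub, map_const', sum_replicate, map_id', hsum,
    sub_zero, nsmul_one] at h

theorem map_intCast_evenKSeq (n : ℕ) :
    (evenKSeq q m).map ((↑) : ℤ → ZMod n) =
      replicate m 0 + replicate m 1 + (range q).map (fun i => -((i : ZMod n) + 1)) +
        (range q).map (fun i => (i : ZMod n) + 2) := by
  simp [evenKSeq, map_map]

end

theorem sum_range_add_two_mul_two_add_two (q : ℕ) :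
    (∑ i ∈ Finset.range q, (i + 2)) * 2 + 2 = (q + 1) * (q + 2) := by
  induction q with
  | zero => rfl
  | succ q ih => rw [Finset.sum_range_succ]; linear_combination ih

theorem nZeroFree_map_intCast_evenKSeq {q m n : ℕ}
    (hn : n = m + ∑ i ∈ Finset.range q, (i + 2) + 1) :
    NZeroFree ((evenKSeq q m).map ((↑) : ℤ → ZMod n)) :=
  nZeroFree_map_intCast fun τ hτ hcard => by
    replace hn : (n : ℤ) = m + ∑ i ∈ Finset.range q, ((i : ℤ) + 2) + 1 := by
      rw [hn]; push_cast; rfl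
    have habs := abs_sum_le_of_le_evenKSeq hτ
    refine ⟨fun hsum => ?_, by omega⟩
    have := card_le_of_le_evenKSeq_of_sum_eq_zero hτ hsum
    omega

/-- For even `k ≥ 2` and `n ≥ (k² + 2k)/8 + 1`, the sequence in `ZMod n` consisting of
`−(k−2)/2, …, −1` each once, `0` and `1` each with multiplicity `n − (k²+2k)/8`, and
`2, …, k/2` each once, is `n`-zero-free, has length `2n − 2 − ⌊((k−1)/2)²⌋` (note
`⌊((k−1)/2)²⌋ = (k−1)²/4` with natural division), and has exactly `k` distinct terms. -/
theorem even_k_example (k n : ℕ) (hk : 2 ≤ k) (hke : Even k)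
    (hn : (k ^ 2 + 2 * k) / 8 + 1 ≤ n) :
    NZeroFree
      (Multiset.replicate (n - (k ^ 2 + 2 * k) / 8) (0 : ZMod n) +
       Multiset.replicate (n - (k ^ 2 + 2 * k) / 8) (1 : ZMod n) +
       (Multiset.range ((k - 2) / 2)).map (fun i => -((i : ZMod n) + 1)) +
       (Multiset.range (k / 2 - 1)).map (fun i => (i : ZMod n) + 2)) ∧
    Multiset.card
      (Multiset.replicate (n - (k ^ 2 + 2 * k) / 8) (0 : ZMod n) +
       Multiset.replicate (n - (k ^ 2 + 2 * k) / 8) (1 : ZMod n) +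
       (Multiset.range ((k - 2) / 2)).map (fun i => -((i : ZMod n) + 1)) +
       (Multiset.range (k / 2 - 1)).map (fun i => (i : ZMod n) + 2)) =
      2 * n - 2 - (k - 1) ^ 2 / 4 ∧
    (Multiset.replicate (n - (k ^ 2 + 2 * k) / 8) (0 : ZMod n) +
       Multiset.replicate (n - (k ^ 2 + 2 * k) / 8) (1 : ZMod n) +
       (Multiset.range ((k - 2) / 2)).map (fun i => -((i : ZMod n) + 1)) +
       (Multiset.range (k / 2 - 1)).map (fun i => (i : ZMod n) + 2)).toFinset.card = k := by
  obtain ⟨q, rfl⟩ : ∃ q, k = 2 * q + 2 := ⟨k / 2 - 1, by grind⟩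
  have hsum : (∑ i ∈ Finset.range q, (i + 2)) * 2 + 2 = q * q + 3 * q + 2 := by
    rw [sum_range_add_two_mul_two_add_two]; ring
  have hT : ((2 * q + 2) ^ 2 + 2 * (2 * q + 2)) / 8 = ∑ i ∈ Finset.range q, (i + 2) + 1 := by
    rw [show (2 * q + 2) ^ 2 + 2 * (2 * q + 2) = 4 * (q * q + 3 * q + 2) by ring]
    omega
  rw [hT] at hn ⊢
  rw [show (2 * q + 2 - 2) / 2 = q by omega, show (2 * q + 2) / 2 - 1 = q by omega,
    ← map_intCast_evenKSeq]
  refine ⟨nZeroFree_map_intCast_evenKSeq (by omega), ?_, ?_⟩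
  · have hsq : (2 * q + 2 - 1) ^ 2 / 4 = q * q + q := by
      rw [show 2 * q + 2 - 1 = 2 * q + 1 by omega,
        show (2 * q + 1) ^ 2 = 4 * (q * q + q) + 1 by ring]
      omega
    rw [card_map, card_evenKSeq, hsq]
    omega
  · have hq : 2 * q + 2 ≤ n := by nlinarith [Nat.le_mul_self q]
    rw [toFinset_map, toFinset_evenKSeq q _ (by omega),
      Finset.card_image_of_injOn ((injOn_intCast_Ico n (-q)).mono fun x hx => by
        simp only [Finset.coe_Ico, Set.mem_Ico] at hx ⊢; omega)]
    simp only [Int.card_Ico]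
    omega
end
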